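/- Let a ∈ (0,1) and let β₁, β₂ ∈ [−a/√(1−a²), a/√(1−a²)]. If |F₂(β₁) − F₂(β₂)| = π and cos(F₂(β₁)) < 0, then |β₁| > |β₂|, and consequently t₂(β₁) < t₂(β₂). -/

import Mathlib

/-!
On `[-c, c]`, `c = a / √(1 - a²)`, the function `F₂ a` is odd and strictly increasing (its
derivative is a sum of two positive terms), with `F₂ a c = (1 + a)π/2 < π`. Hence both values
`F₂ a βᵢ` lie in `(-π, π)`; since they differ by `π` and `cos (F₂ a β₁) < 0` forces
`|F₂ a β₁| > π/2`, we get `|F₂ a β₂| = π - |F₂ a β₁| < |F₂ a β₁|`. As `|F₂ a β| = F₂ a |β|`,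
monotonicity gives `|β₂| < |β₁|`, and `t₂ a` is strictly decreasing in `|β|`.
-/

open Real Set

/-- The argument function `F₂(β)` in the long-time case. -/
noncomputable def F₂ (a β : ℝ) : ℝ :=
  β / Real.sqrt (1 + β^2) * (Real.pi - Real.arcsin (Real.sqrt ((1 - a^2) * (1 + β^2)))) +
    Real.arcsin (β * Real.sqrt (1 - a^2) / a)

/-- The candidate sub-Riemannian distance `t₂(β)` in the long-time case. -/
noncomputable def t₂ (a β : ℝ) : ℝ :=
  2 / Real.sqrt (1 + β^2) * (Real.pi - Real.arcsin (Real.sqrt ((1 - a^2) * (1 + β^2))))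

lemma hasDerivAt_div_sqrt_one_add_sq (β : ℝ) :
    HasDerivAt (fun x : ℝ => x / √(1 + x ^ 2)) (1 / ((1 + β ^ 2) * √(1 + β ^ 2))) β := by
  have hu : 0 < 1 + β ^ 2 := by positivity
  have hsqrt := ((hasDerivAt_pow 2 β).const_add 1).sqrt hu.ne'
  refine ((hasDerivAt_id β).div hsqrt (sqrt_pos.2 hu).ne').congr_deriv ?_
  have := sq_sqrt hu.le
  simp only [id, Nat.cast_ofNat, pow_one, Nat.add_one_sub_one]
  field_simp
  linear_combination β ^ 2 * this

lemma hasDerivAt_arcsin_sqrt_mul_one_add_sq {q β : ℝ} (hq : 0 < q) (hβ : q * (1 + β ^ 2) < 1) :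
    HasDerivAt (fun x : ℝ => arcsin √(q * (1 + x ^ 2)))
      (√q * β / (√(1 - q * (1 + β ^ 2)) * √(1 + β ^ 2))) β := by
  have hpos : 0 < q * (1 + β ^ 2) := by positivity
  have hS : √(q * (1 + β ^ 2)) < 1 := by rwa [sqrt_lt' one_pos, one_pow]
  have hinner := (((hasDerivAt_pow 2 β).const_add 1).const_mul q).sqrt hpos.ne'
  refine ((hasDerivAt_arcsin (by linarith [sqrt_nonneg (q * (1 + β ^ 2))]) hS.ne).comp β
    hinner).congr_deriv ?_
  have h1 : 0 < √(1 - q * (1 + β ^ 2)) := sqrt_pos.2 (by linarith)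
  have h2 : 0 < √(1 + β ^ 2) := sqrt_pos.2 (by positivity)
  rw [sq_sqrt hpos.le, sqrt_mul hq.le]
  have := sq_sqrt hq.le
  simp only [Nat.cast_ofNat, pow_one, Nat.add_one_sub_one]
  field_simp
  linear_combination (-β) * this

lemma hasDerivAt_arcsin_mul_const {k β : ℝ} (hβ : (β * k) ^ 2 < 1) :
    HasDerivAt (fun x : ℝ => arcsin (x * k)) (k / √(1 - (β * k) ^ 2)) β := by
  have habs := abs_lt.1 ((sq_lt_one_iff_abs_lt_one _).1 hβ)
  refine ((hasDerivAt_arcsin habs.1.ne' habs.2.ne).comp β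
    ((hasDerivAt_id β).mul_const k)).congr_deriv ?_
  simp [div_eq_mul_inv, mul_comm]

lemma hasDerivAt_F₂ {a β : ℝ} (ha : a ∈ Ioo 0 1) (hβ : (1 - a ^ 2) * β ^ 2 < a ^ 2) :
    HasDerivAt (F₂ a)
      ((π - arcsin √((1 - a ^ 2) * (1 + β ^ 2))) / ((1 + β ^ 2) * √(1 + β ^ 2)) +
        √(1 - a ^ 2) / ((1 + β ^ 2) * √(a ^ 2 - (1 - a ^ 2) * β ^ 2))) β := by
  obtain ⟨ha0, ha1⟩ := ha
  have hq : 0 < 1 - a ^ 2 := by nlinarith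
  have hD : 0 < a ^ 2 - (1 - a ^ 2) * β ^ 2 := by linarith
  have hB : (β * (√(1 - a ^ 2) / a)) ^ 2 < 1 := by
    rw [mul_div_assoc', div_pow, mul_pow, sq_sqrt hq.le, div_lt_one (by positivity)]
    linarith
  have hsum := ((hasDerivAt_div_sqrt_one_add_sq β).mul ((hasDerivAt_const β π).sub
    (hasDerivAt_arcsin_sqrt_mul_one_add_sq hq (by linarith)))).add
    (hasDerivAt_arcsin_mul_const hB)
  have hF : F₂ a = fun x => x / √(1 + x ^ 2) * (π - arcsin √((1 - a ^ 2) * (1 + x ^ 2))) +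
      arcsin (x * (√(1 - a ^ 2) / a)) := by
    funext x; rw [F₂, mul_div_assoc]
  rw [hF]
  refine hsum.congr_deriv ?_
  have e1 : 1 - (1 - a ^ 2) * (1 + β ^ 2) = a ^ 2 - (1 - a ^ 2) * β ^ 2 := by ring
  have e2 : √(1 - (β * (√(1 - a ^ 2) / a)) ^ 2) = √(a ^ 2 - (1 - a ^ 2) * β ^ 2) / a := by
    have : 1 - (β * (√(1 - a ^ 2) / a)) ^ 2 = (a ^ 2 - (1 - a ^ 2) * β ^ 2) / a ^ 2 := by
      rw [mul_div_assoc', div_pow, mul_pow, sq_sqrt hq.le]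
      field_simp
    rw [this, sqrt_div hD.le, sqrt_sq ha0.le]
  have hP := sq_sqrt (show 0 ≤ 1 + β ^ 2 by positivity)
  have hP0 : 0 < √(1 + β ^ 2) := sqrt_pos.2 (by positivity)
  rw [e1, e2]
  set D := √(a ^ 2 - (1 - a ^ 2) * β ^ 2)
  have hD0 : 0 < D := sqrt_pos.2 hD
  simp only [Pi.sub_apply]
  field_simp
  linear_combination β ^ 2 * √(1 - a ^ 2) * hP

lemma continuous_F₂ (a : ℝ) : Continuous (F₂ a) :=
  ((continuous_id.div (by fun_prop) fun x => (sqrt_pos.2 (by positivity)).ne').mul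
    (continuous_const.sub (continuous_arcsin.comp (by fun_prop)))).add
    (continuous_arcsin.comp (by fun_prop))

lemma F₂_neg (a β : ℝ) : F₂ a (-β) = -F₂ a β := by
  rw [F₂, F₂, neg_sq, neg_mul, neg_div, neg_div, arcsin_neg]
  ring

lemma F₂_zero (a : ℝ) : F₂ a 0 = 0 := by
  simp [F₂]

lemma one_sub_sq_mul_sq_lt_sq {a β : ℝ} (ha : a ∈ Ioo 0 1) (hβ : |β| < a / √(1 - a ^ 2)) :
    (1 - a ^ 2) * β ^ 2 < a ^ 2 := by
  have hq : 0 < 1 - a ^ 2 := by nlinarith [ha.1, ha.2]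
  rw [lt_div_iff₀ (sqrt_pos.2 hq)] at hβ
  have := pow_lt_pow_left₀ hβ (by positivity) two_ne_zero
  rwa [mul_pow, sq_abs, sq_sqrt hq.le, mul_comm] at this

lemma strictMonoOn_F₂ {a : ℝ} (ha : a ∈ Ioo 0 1) :
    StrictMonoOn (F₂ a) (Icc (-(a / √(1 - a ^ 2))) (a / √(1 - a ^ 2))) := by
  refine strictMonoOn_of_deriv_pos (convex_Icc _ _) (continuous_F₂ a).continuousOn fun x hx => ?_
  rw [interior_Icc] at hx
  have hx' := one_sub_sq_mul_sq_lt_sq ha (abs_lt.2 hx)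
  rw [(hasDerivAt_F₂ ha hx').deriv]
  have harcsin := arcsin_le_pi_div_two √((1 - a ^ 2) * (1 + x ^ 2))
  have hq : 0 < √(1 - a ^ 2) := sqrt_pos.2 (by nlinarith [ha.1, ha.2])
  have hD : 0 < √(a ^ 2 - (1 - a ^ 2) * x ^ 2) := sqrt_pos.2 (by linarith)
  have := pi_pos
  exact add_pos (div_pos (by linarith) (by positivity)) (div_pos hq (by positivity))

lemma F₂_endpoint {a : ℝ} (ha : a ∈ Ioo 0 1) :
    F₂ a (a / √(1 - a ^ 2)) = (a + 1) * π / 2 := by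
  obtain ⟨ha0, ha1⟩ := ha
  have hq : 0 < 1 - a ^ 2 := by nlinarith
  set Q := √(1 - a ^ 2)
  have hQ : 0 < Q := sqrt_pos.2 hq
  have hQ2 : Q ^ 2 = 1 - a ^ 2 := sq_sqrt hq.le
  have h1 : 1 + (a / Q) ^ 2 = 1 / Q ^ 2 := by field_simp; linarith
  have h2 : √(1 + (a / Q) ^ 2) = 1 / Q := by
    rw [h1, one_div, sqrt_inv, sqrt_sq hQ.le, one_div]
  have h3 : (1 - a ^ 2) * (1 + (a / Q) ^ 2) = 1 := by
    rw [h1, ← hQ2]; field_simp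
  have h4 : a / Q * Q / a = 1 := by field_simp
  have h5 : a / Q / (1 / Q) = a := by field_simp
  rw [F₂, h2, h3, h4, h5, sqrt_one, arcsin_one]
  ring

lemma abs_mem_Icc {c β : ℝ} (hβ : β ∈ Icc (-c) c) : |β| ∈ Icc (-c) c := by
  rw [mem_Icc, ← abs_le, abs_abs, abs_le]
  exact hβ

lemma abs_F₂_lt_pi {a β : ℝ} (ha : a ∈ Ioo 0 1)
    (hβ : β ∈ Icc (-(a / √(1 - a ^ 2))) (a / √(1 - a ^ 2))) : |F₂ a β| < π := by
  have hub : F₂ a β ≤ (a + 1) * π / 2 := by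
    rw [← F₂_endpoint ha]
    exact (strictMonoOn_F₂ ha).monotoneOn hβ ⟨hβ.1.trans hβ.2, le_rfl⟩ hβ.2
  have hlb : -((a + 1) * π / 2) ≤ F₂ a β := by
    rw [← F₂_endpoint ha, ← F₂_neg]
    exact (strictMonoOn_F₂ ha).monotoneOn ⟨le_rfl, hβ.1.trans hβ.2⟩ hβ hβ.1
  have := pi_pos
  rw [abs_lt]
  constructor <;> nlinarith [ha.2]

lemma abs_F₂ {a β : ℝ} (ha : a ∈ Ioo 0 1)
    (hβ : β ∈ Icc (-(a / √(1 - a ^ 2))) (a / √(1 - a ^ 2))) : |F₂ a β| = F₂ a |β| := by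
  have hnonneg : 0 ≤ F₂ a |β| := by
    rw [← F₂_zero a]
    have hc : 0 ≤ a / √(1 - a ^ 2) := (abs_nonneg β).trans (abs_mem_Icc hβ).2
    have h0 : (0 : ℝ) ∈ Icc (-(a / √(1 - a ^ 2))) (a / √(1 - a ^ 2)) := ⟨neg_nonpos.2 hc, hc⟩
    exact (strictMonoOn_F₂ ha).monotoneOn h0 (abs_mem_Icc hβ) (abs_nonneg β)
  rcases abs_cases β with ⟨hβabs, -⟩ | ⟨hβabs, -⟩
  · rw [hβabs] at hnonneg ⊢
    exact abs_of_nonneg hnonneg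
  · rw [hβabs, F₂_neg] at hnonneg ⊢
    exact abs_of_nonpos (neg_nonneg.1 hnonneg)

lemma abs_lt_abs_of_abs_sub_eq_pi {x y : ℝ} (hx : |x| < π) (hy : |y| < π) (hxy : |x - y| = π)
    (hcos : cos x < 0) : |y| < |x| := by
  have hx2 : π / 2 < |x| := lt_of_not_ge fun h =>
    hcos.not_ge (cos_nonneg_of_mem_Icc (abs_le.1 h))
  rcases abs_cases x with ⟨hx', -⟩ | ⟨hx', -⟩ <;> rcases abs_cases y with ⟨hy', -⟩ | ⟨hy', -⟩ <;>
    rcases abs_cases (x - y) with ⟨hxy', -⟩ | ⟨hxy', -⟩ <;> linarith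

lemma t₂_lt_t₂_of_abs_lt {a x y : ℝ} (ha : a ^ 2 ≤ 1) (hxy : |x| < |y|) : t₂ a y < t₂ a x := by
  have hxy2 : x ^ 2 < y ^ 2 := sq_lt_sq.2 hxy
  have hx : 0 < √(1 + x ^ 2) := sqrt_pos.2 (by positivity)
  have hfactor : 2 / √(1 + y ^ 2) < 2 / √(1 + x ^ 2) :=
    div_lt_div_of_pos_left two_pos hx (sqrt_lt_sqrt (by positivity) (by linarith))
  have harcsin : arcsin √((1 - a ^ 2) * (1 + x ^ 2)) ≤ arcsin √((1 - a ^ 2) * (1 + y ^ 2)) :=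
    monotone_arcsin (sqrt_le_sqrt (by nlinarith))
  have hpos : 0 < π - arcsin √((1 - a ^ 2) * (1 + y ^ 2)) := by
    linarith [arcsin_le_pi_div_two √((1 - a ^ 2) * (1 + y ^ 2)), pi_pos]
  exact mul_lt_mul hfactor (by linarith) hpos (by positivity)

/-- If `|F₂(β₁) − F₂(β₂)| = π` and `cos(F₂(β₁)) < 0`, then `|β₁| > |β₂|`
and `t₂(β₁) < t₂(β₂)`. -/
theorem beta_comparison_long (a β₁ β₂ : ℝ) (ha : a ∈ Set.Ioo (0:ℝ) 1)
    (hβ₁ : β₁ ∈ Set.Icc (-(a / Real.sqrt (1 - a^2))) (a / Real.sqrt (1 - a^2)))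
    (hβ₂ : β₂ ∈ Set.Icc (-(a / Real.sqrt (1 - a^2))) (a / Real.sqrt (1 - a^2)))
    (hdiff : |F₂ a β₁ - F₂ a β₂| = Real.pi) (hcos : Real.cos (F₂ a β₁) < 0) :
    |β₁| > |β₂| ∧ t₂ a β₁ < t₂ a β₂ := by
  have hF : |F₂ a β₂| < |F₂ a β₁| :=
    abs_lt_abs_of_abs_sub_eq_pi (abs_F₂_lt_pi ha hβ₁) (abs_F₂_lt_pi ha hβ₂) hdiff hcos
  rw [abs_F₂ ha hβ₁, abs_F₂ ha hβ₂] at hF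
  have hβ : |β₂| < |β₁| :=
    ((strictMonoOn_F₂ ha).lt_iff_lt (abs_mem_Icc hβ₂) (abs_mem_Icc hβ₁)).1 hF
  exact ⟨hβ, t₂_lt_t₂_of_abs_lt (by nlinarith [ha.1, ha.2]) hβ⟩
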